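/- arXiv:2302.13237 — 2 statements merged into one kernel-verified Lean document; each statement's English description precedes it below -/
import Mathlib

section
/- Let ξ_n be the reflected Gray code bijection and for 1 ≤ i ≤ 2^{n−1} let F_i = {i, i+1, ..., i + 2^{n−1} − 1} (an arc of 2^{n−1} consecutive labels). Then for n ≥ 2, Σ_{i=1}^{2^{n−1}} θ(n, ξ_n^{-1}(F_i)) = 3·2^{2n−3} − 2^{n−1}. -/
/-!
Double counting: `∑ᵢ θ(n, ξ⁻¹(Fᵢ))` counts, for every edge `uv` of `Q_n`, the arcs `Fᵢ` that
separate `ξ u` from `ξ v`, and among the `2^(n-1)` half-length arcs exactly `cycDist (2^n) a b`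
separate `a` from `b`. The sum is therefore the wirelength of the Gray code embedding of `Q_n`
into the cycle `C_{2^n}`. That wirelength follows from the reflection structure of `ξ`: edges
inside either half keep their distances (which sum to `4^n - 2^n` over ordered pairs for the
path), and the cross edges join `a` to `2^(n+1) + 1 - a`.
-/

open Finset

/-- Number of coordinates in which two 0-1 vectors differ. -/
def diffCount {n : ℕ} (u v : Fin n → Bool) : ℕ :=
  (Finset.univ.filter fun i => u i ≠ v i).card

/-- Adjacency in the hypercube `Q_n`: differ in exactly one coordinate. -/
def cubeAdj {n : ℕ} (u v : Fin n → Bool) : Prop := diffCount u v = 1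

instance {n : ℕ} (u v : Fin n → Bool) : Decidable (cubeAdj u v) :=
  inferInstanceAs (Decidable (diffCount u v = 1))

/-- `theta n S`: number of edges of `Q_n` with exactly one endpoint in `S`. -/
def theta (n : ℕ) (S : Finset (Fin n → Bool)) : ℕ :=
  ((Finset.univ ×ˢ Finset.univ).filter fun p : (Fin n → Bool) × (Fin n → Bool) =>
    p.1 ∈ S ∧ p.2 ∉ S ∧ cubeAdj p.1 p.2).card

/-- The reflected Gray code map `ξ_n : {0,1}^n → {1,...,2^n}`. -/
def gray : (n : ℕ) → (Fin n → Bool) → ℕ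
  | 0, _ => 1
  | n + 1, v =>
    if v 0 = false then gray n (fun i => v i.succ)
    else 2 ^ (n + 1) + 1 - gray n (fun i => v i.succ)

/-- Wirelength of an embedding `f` of `Q_n` into a host with distance `d`. -/
def wirelength {n : ℕ} {α : Type*} (d : α → α → ℕ) (f : (Fin n → Bool) → α) : ℕ :=
  (∑ u : Fin n → Bool, ∑ v : Fin n → Bool, if cubeAdj u v then d (f u) (f v) else 0) / 2

/-- Cyclic distance on the cycle with `m` vertices labeled `1,...,m`. -/
def cycDist (m a b : ℕ) : ℕ := min (Nat.dist a b) (m - Nat.dist a b)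

/-- The 2-order Gray code map. -/
def gray2 (n₁ n₂ : ℕ) (v : Fin (n₁ + n₂) → Bool) : ℕ × ℕ :=
  (gray n₁ fun i => v (Fin.castAdd n₂ i), gray n₂ fun i => v (Fin.natAdd n₁ i))

lemma sum_fun_fin_succ {α M : Type*} [Fintype α] [AddCommMonoid M] {n : ℕ}
    (g : (Fin (n + 1) → α) → M) : ∑ v, g v = ∑ x, ∑ u, g (Fin.cons x u) := by
  rw [← Fintype.sum_prod_type']
  exact (Fintype.sum_equiv (Fin.consEquiv fun _ => α) _ _ fun _ => rfl).symm

lemma sum_Icc_one_eq_sum_range {M : Type*} [AddCommMonoid M] (f : ℕ → M) (m : ℕ) :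
    ∑ a ∈ Icc 1 m, f a = ∑ i ∈ range m, f (i + 1) := by
  rw [← Ico_add_one_right_eq_Icc, sum_Ico_eq_sum_range]
  simp [add_comm]

lemma sum_range_odd (k : ℕ) : ∑ i ∈ range k, (2 * i + 1) = k ^ 2 := by
  induction k with
  | zero => simp
  | succ k ih => rw [sum_range_succ, ih]; ring

lemma sum_range_odd_reflect (k : ℕ) : ∑ i ∈ range k, (2 * k - 1 - 2 * i) = k ^ 2 := by
  rw [← sum_range_odd, ← sum_range_reflect]
  exact sum_congr rfl fun i hi => by have := mem_range.1 hi; omega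

lemma sum_range_min_odd (k : ℕ) :
    ∑ i ∈ range (2 * k), min (2 * i + 1) (4 * k - 1 - 2 * i) = 2 * k ^ 2 := by
  rw [two_mul k, sum_range_add, two_mul (k ^ 2)]
  congr 1
  · rw [← sum_range_odd]
    exact sum_congr rfl fun i hi => by have := mem_range.1 hi; omega
  · rw [← sum_range_odd_reflect]
    exact sum_congr rfl fun i hi => by have := mem_range.1 hi; omega

lemma diffCount_cons {n : ℕ} (x y : Bool) (u v : Fin n → Bool) :
    diffCount (Fin.cons x u) (Fin.cons y v) = (if x ≠ y then 1 else 0) + diffCount u v := by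
  simp only [diffCount, card_filter, Fin.sum_univ_succ, Fin.cons_zero, Fin.cons_succ]

lemma diffCount_eq_zero {n : ℕ} {u v : Fin n → Bool} : diffCount u v = 0 ↔ u = v := by
  simp [diffCount, funext_iff]

lemma cubeAdj_comm {n : ℕ} (u v : Fin n → Bool) : cubeAdj u v ↔ cubeAdj v u := by
  simp only [cubeAdj, diffCount, ne_comm]

lemma cubeAdj_irrefl {n : ℕ} (u : Fin n → Bool) : ¬ cubeAdj u u := by
  simp [cubeAdj, diffCount_eq_zero.2 rfl]

lemma cubeAdj_cons {n : ℕ} (x y : Bool) (u v : Fin n → Bool) :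
    cubeAdj (Fin.cons x u) (Fin.cons y v) ↔ (x = y ∧ cubeAdj u v) ∨ (x ≠ y ∧ u = v) := by
  by_cases h : x = y <;> simp [cubeAdj, diffCount_cons, h, diffCount_eq_zero]

lemma theta_eq_sum {n : ℕ} (S : Finset (Fin n → Bool)) :
    theta n S = ∑ u, ∑ v, if u ∈ S ∧ v ∉ S ∧ cubeAdj u v then 1 else 0 := by
  rw [theta, card_filter, sum_product]

lemma sum_cubeAdj_swap {n : ℕ} (g : (Fin n → Bool) → (Fin n → Bool) → ℕ) :
    ∑ u, ∑ v, (if cubeAdj u v then g u v else 0) =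
      ∑ u, ∑ v, if cubeAdj u v then g v u else 0 := by
  rw [sum_comm]
  simp only [cubeAdj_comm]

lemma sum_theta_preimage {ι α : Type*} [DecidableEq α] {n : ℕ} (s : Finset ι)
    (W : ι → Finset α) (f : (Fin n → Bool) → α) :
    ∑ i ∈ s, theta n (univ.filter fun v => f v ∈ W i) =
      ∑ u, ∑ v, if cubeAdj u v then #(s.filter fun i => f u ∈ W i ∧ f v ∉ W i) else 0 := by
  simp only [theta_eq_sum, mem_filter, mem_univ, true_and]
  rw [sum_comm]
  refine sum_congr rfl fun u _ => ?_
  rw [sum_comm]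
  refine sum_congr rfl fun v _ => ?_
  split_ifs with h
  · simp only [h, and_true, card_filter]
  · simp [h]

lemma gray_cons {n : ℕ} (x : Bool) (u : Fin n → Bool) :
    gray (n + 1) (Fin.cons x u) = if x = false then gray n u else 2 ^ (n + 1) + 1 - gray n u :=
  rfl

lemma gray_mem_Icc : ∀ (n : ℕ) (v : Fin n → Bool), gray n v ∈ Icc 1 (2 ^ n)
  | 0, _ => by simp [gray]
  | n + 1, v => by
    have := mem_Icc.1 (gray_mem_Icc n (Fin.tail v))
    rw [← Fin.cons_self_tail v, gray_cons, mem_Icc, pow_succ]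
    split <;> omega

lemma gray_injective : ∀ n, Function.Injective (gray n)
  | 0 => fun _ _ _ => Subsingleton.elim _ _
  | n + 1 => by
    intro v w h
    induction v using Fin.consCases with | cons x u => ?_
    induction w using Fin.consCases with | cons y u' => ?_
    have hu := mem_Icc.1 (gray_mem_Icc n u)
    have hu' := mem_Icc.1 (gray_mem_Icc n u')
    have ih := @gray_injective n u u'
    rw [gray_cons, gray_cons, pow_succ] at h
    rw [Fin.cons_inj]
    cases x <;> cases y <;> simp only [if_true, if_false, Bool.true_eq_false] at h <;> grind

lemma sum_gray {M : Type*} [AddCommMonoid M] (n : ℕ) (f : ℕ → M) :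
    ∑ v, f (gray n v) = ∑ a ∈ Icc 1 (2 ^ n), f a := by
  have himage : univ.image (gray n) = Icc 1 (2 ^ n) :=
    eq_of_subset_of_card_le
      (fun a ha => by obtain ⟨v, -, rfl⟩ := mem_image.1 ha; exact gray_mem_Icc n v)
      (by simp [card_image_of_injective _ (gray_injective n)])
  rw [← himage, sum_image fun v _ w _ h => gray_injective n h]

def arcSep (M a b : ℕ) : ℕ :=
  #((Icc 1 M).filter fun i => a ∈ Icc i (i + M - 1) ∧ b ∉ Icc i (i + M - 1))

lemma arcSep_add_arcSep_of_lt {M a b : ℕ} (ha : 1 ≤ a) (hab : a < b) (hb : b ≤ 2 * M) :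
    arcSep M a b + arcSep M b a = cycDist (2 * M) a b := by
  have hab' : (Icc 1 M).filter (fun i => a ∈ Icc i (i + M - 1) ∧ b ∉ Icc i (i + M - 1)) =
      Icc (max 1 (a + 1 - M)) (min a (b - M)) := by
    ext i; simp only [mem_filter, mem_Icc]; omega
  have hba : (Icc 1 M).filter (fun i => b ∈ Icc i (i + M - 1) ∧ a ∉ Icc i (i + M - 1)) =
      Icc (max (a + 1) (b + 1 - M)) (min b M) := by
    ext i; simp only [mem_filter, mem_Icc]; omega
  rw [arcSep, arcSep, hab', hba, Nat.card_Icc, Nat.card_Icc, cycDist, Nat.dist]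
  omega

lemma arcSep_add_arcSep {M a b : ℕ} (ha : a ∈ Icc 1 (2 * M)) (hb : b ∈ Icc 1 (2 * M))
    (hab : a ≠ b) :
    arcSep M a b + arcSep M b a = cycDist (2 * M) a b := by
  rw [mem_Icc] at ha hb
  rcases hab.lt_or_gt with h | h
  · exact arcSep_add_arcSep_of_lt ha.1 h hb.2
  · rw [add_comm, cycDist, Nat.dist_comm]
    exact arcSep_add_arcSep_of_lt hb.1 h ha.2

-- Ordered pairs, so every edge counts twice: `wirelength d (gray n) = grayEdgeSum n d / 2`.
def grayEdgeSum (n : ℕ) (d : ℕ → ℕ → ℕ) : ℕ :=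
  ∑ u : Fin n → Bool, ∑ v : Fin n → Bool, if cubeAdj u v then d (gray n u) (gray n v) else 0

lemma grayEdgeSum_congr {n : ℕ} {d d' : ℕ → ℕ → ℕ}
    (h : ∀ a ∈ Icc 1 (2 ^ n), ∀ b ∈ Icc 1 (2 ^ n), d a b = d' a b) :
    grayEdgeSum n d = grayEdgeSum n d' := by
  unfold grayEdgeSum
  refine sum_congr rfl fun u _ => sum_congr rfl fun v _ => ?_
  rw [h _ (gray_mem_Icc n u) _ (gray_mem_Icc n v)]

lemma grayEdgeSum_succ (n : ℕ) (d : ℕ → ℕ → ℕ) :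
    grayEdgeSum (n + 1) d =
      grayEdgeSum n d + grayEdgeSum n (fun a b => d (2 ^ (n + 1) + 1 - a) (2 ^ (n + 1) + 1 - b)) +
        ∑ a ∈ Icc 1 (2 ^ n), (d a (2 ^ (n + 1) + 1 - a) + d (2 ^ (n + 1) + 1 - a) a) := by
  simp only [grayEdgeSum, sum_fun_fin_succ, Fintype.sum_bool, cubeAdj_cons, gray_cons]
  simp [sum_add_distrib, sum_ite_eq, ← sum_gray n]
  ring

lemma grayEdgeSum_dist_succ (n : ℕ) :
    grayEdgeSum (n + 1) Nat.dist = 2 * grayEdgeSum n Nat.dist + 2 * 4 ^ n := by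
  have hreflect : grayEdgeSum n (fun a b => Nat.dist (2 ^ (n + 1) + 1 - a) (2 ^ (n + 1) + 1 - b)) =
      grayEdgeSum n Nat.dist :=
    grayEdgeSum_congr fun a ha b hb => by
      simp only [mem_Icc] at ha hb; simp only [Nat.dist]; omega
  have hcross : ∑ a ∈ Icc 1 (2 ^ n),
      (Nat.dist a (2 ^ (n + 1) + 1 - a) + Nat.dist (2 ^ (n + 1) + 1 - a) a) = 2 * 4 ^ n := by
    rw [sum_Icc_one_eq_sum_range, show 4 ^ n = (2 ^ n) ^ 2 by rw [pow_right_comm]; norm_num,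
      ← sum_range_odd_reflect, mul_sum]
    exact sum_congr rfl fun i hi => by have := mem_range.1 hi; simp only [Nat.dist]; omega
  rw [grayEdgeSum_succ, hreflect, hcross]
  ring

lemma grayEdgeSum_dist (n : ℕ) : grayEdgeSum n Nat.dist + 2 ^ n = 4 ^ n := by
  induction n with
  | zero => simp [grayEdgeSum, cubeAdj_irrefl]
  | succ n ih => rw [grayEdgeSum_dist_succ, pow_succ, pow_succ]; omega

lemma grayEdgeSum_cycDist (n : ℕ) :
    grayEdgeSum (n + 2) (cycDist (2 ^ (n + 2))) + 2 ^ (n + 2) = 3 * 4 ^ (n + 1) := by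
  have hpow : 2 ^ (n + 2) = 4 * 2 ^ n := by ring
  have hlow : grayEdgeSum (n + 1) (cycDist (2 ^ (n + 2))) = grayEdgeSum (n + 1) Nat.dist :=
    grayEdgeSum_congr fun a ha b hb => by
      simp only [mem_Icc] at ha hb; simp only [cycDist, Nat.dist]; omega
  have hhigh : grayEdgeSum (n + 1)
      (fun a b => cycDist (2 ^ (n + 2)) (2 ^ (n + 2) + 1 - a) (2 ^ (n + 2) + 1 - b)) =
      grayEdgeSum (n + 1) Nat.dist :=
    grayEdgeSum_congr fun a ha b hb => by
      simp only [mem_Icc] at ha hb; simp only [cycDist, Nat.dist]; omega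
  have hcross : ∑ a ∈ Icc 1 (2 ^ (n + 1)),
      (cycDist (2 ^ (n + 2)) a (2 ^ (n + 2) + 1 - a) +
        cycDist (2 ^ (n + 2)) (2 ^ (n + 2) + 1 - a) a) = 4 ^ (n + 1) := by
    rw [sum_Icc_one_eq_sum_range, show 2 ^ (n + 1) = 2 * 2 ^ n by ring,
      show 4 ^ (n + 1) = 2 * (2 * (2 ^ n) ^ 2) by rw [pow_right_comm]; ring,
      ← sum_range_min_odd, mul_sum]
    exact sum_congr rfl fun i hi => by have := mem_range.1 hi; simp only [cycDist, Nat.dist]; omega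
  have := grayEdgeSum_dist (n + 1)
  rw [grayEdgeSum_succ, hlow, hhigh, hcross, pow_succ 4]
  rw [pow_succ 2] at this
  omega

lemma sum_theta_gray_arcs (n M : ℕ) (hM : 2 * M = 2 ^ n) :
    ∑ i ∈ Icc 1 M, theta n (univ.filter fun v => gray n v ∈ Icc i (i + M - 1)) =
      wirelength (cycDist (2 ^ n)) (gray n) := by
  rw [sum_theta_preimage]
  set A := ∑ u, ∑ v, if cubeAdj u v then arcSep M (gray n u) (gray n v) else 0
  have hA : A + A = grayEdgeSum n (cycDist (2 ^ n)) := by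
    nth_rw 2 [show A = ∑ u, ∑ v, if cubeAdj u v then arcSep M (gray n v) (gray n u) else 0 from
      sum_cubeAdj_swap _]
    rw [grayEdgeSum, ← sum_add_distrib]
    refine sum_congr rfl fun u _ => ?_
    rw [← sum_add_distrib]
    refine sum_congr rfl fun v _ => ?_
    split_ifs with h
    · rw [← hM]
      refine arcSep_add_arcSep (hM ▸ gray_mem_Icc n u) (hM ▸ gray_mem_Icc n v) fun he => ?_
      exact cubeAdj_irrefl v (gray_injective n he ▸ h)
    · rfl
  change A = grayEdgeSum n (cycDist (2 ^ n)) / 2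
  omega

lemma wirelength_gray_cycDist (m : ℕ) :
    wirelength (cycDist (2 ^ (m + 2))) (gray (m + 2)) + 2 ^ (m + 1) = 3 * 2 ^ (2 * m + 1) := by
  have h := grayEdgeSum_cycDist m
  rw [show 4 ^ (m + 1) = 2 * 2 ^ (2 * m + 1) by rw [pow_succ, pow_succ, pow_mul]; ring] at h
  have h2 : 2 ^ (m + 2) = 2 * 2 ^ (m + 1) := by ring
  change grayEdgeSum (m + 2) (cycDist (2 ^ (m + 2))) / 2 + _ = _
  omega

theorem stmt5 (n : ℕ) (hn : 2 ≤ n) :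
    ∑ i ∈ Finset.Icc 1 (2 ^ (n - 1)),
        theta n (Finset.univ.filter fun v =>
          gray n v ∈ Finset.Icc i (i + 2 ^ (n - 1) - 1)) =
      3 * 2 ^ (2 * n - 3) - 2 ^ (n - 1) := by
  obtain ⟨m, rfl⟩ : ∃ m, n = m + 2 := ⟨n - 2, by omega⟩
  rw [show m + 2 - 1 = m + 1 by omega, show 2 * (m + 2) - 3 = 2 * m + 1 by omega,
    sum_theta_gray_arcs (m + 2) (2 ^ (m + 1)) (by ring), ← wirelength_gray_cycDist m]
  omega
end

section
/- Let H be a connected graph with 2^n vertices and let f : {0,1}^n → V(H) be a bijection. Suppose (L_i)_{i=1}^m is a partition of E(H) such that each L_i is an edge cut separating H into exactly two connected components, with l_i the vertex set of one component, and such that for every edge {u,v} of Q_n some shortest path P_f(u,v) in H between f(u) and f(v) crosses L_i exactly once if {u,v} has exactly one endpoint mapped into l_i and zero times otherwise. Then the wirelength of f, i.e. Σ_{{u,v} ∈ E(Q_n)} d_H(f(u), f(v)), equals Σ_{i=1}^m θ(n, f^{-1}(l_i)). -/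
open Finset

/-!
Since the cuts `L i` partition `E(H)`, the length of the shortest path `P_f(u,v)` is the
number of cuts it crosses, which by hypothesis is the number of `i` such that the hypercube
edge `{u,v}` has exactly one endpoint in `f⁻¹(l i)`. Summing over the edges of `Q_n` and
exchanging the two sums, the `i`-th cut contributes exactly `θ(n, f⁻¹(l i))`.
-/

lemma diffCount_comm {n : ℕ} (u v : Fin n → Bool) : diffCount u v = diffCount v u := by
  simp only [diffCount, ne_comm]

lemma List.length_eq_sum_countP_of_existsUnique {α ι : Type*} [Fintype ι] (p : ι → α → Bool)
    (xs : List α) (h : ∀ x ∈ xs, ∃! i, p i x) :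
    xs.length = ∑ i, xs.countP (p i) := by
  induction xs with
  | nil => simp
  | cons a t ih =>
    obtain ⟨i₀, hi₀, huniq⟩ := h a List.mem_cons_self
    have hone : ∑ i, (if p i a then 1 else 0) = 1 := by
      rw [Finset.sum_eq_single i₀ (fun j _ hj => if_neg fun hj' => hj (huniq j hj'))
        (by simp)]
      simp [hi₀]
    simp only [List.countP_cons, List.length_cons, Finset.sum_add_distrib, hone,
      ih fun x hx => h x (List.mem_cons_of_mem _ hx)]

lemma SimpleGraph.Walk.length_eq_sum_countP_edges {V ι : Type*} [Fintype ι] [DecidableEq V]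
    {G : SimpleGraph V} (L : ι → Finset (Sym2 V))
    (hdisj : ∀ i j, i ≠ j → Disjoint (L i) (L j)) (hcover : ∀ e ∈ G.edgeSet, ∃ i, e ∈ L i)
    {x y : V} (p : G.Walk x y) :
    p.length = ∑ i, p.edges.countP (fun e => decide (e ∈ L i)) := by
  rw [← p.length_edges]
  refine List.length_eq_sum_countP_of_existsUnique _ _ fun e he => ?_
  obtain ⟨i, hi⟩ := hcover e (p.edges_subset_edgeSet he)
  exact ⟨i, by simpa using hi, fun j hj => by_contra fun hne =>
    Finset.disjoint_left.mp (hdisj j i hne) (by simpa using hj) hi⟩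

lemma two_mul_theta {n : ℕ} (S : Finset (Fin n → Bool)) :
    2 * theta n S = ∑ u, ∑ v,
      if cubeAdj u v then (if (u ∈ S ∧ v ∉ S) ∨ (v ∈ S ∧ u ∉ S) then 1 else 0) else 0 := by
  have hswap : theta n S = ∑ u, ∑ v, if v ∈ S ∧ u ∉ S ∧ cubeAdj u v then 1 else 0 := by
    rw [theta_eq_sum, Finset.sum_comm]
    simp only [cubeAdj_comm]
  conv_lhs => rw [two_mul]; arg 1; rw [theta_eq_sum]
  rw [hswap, ← Finset.sum_add_distrib]
  refine Finset.sum_congr rfl fun u _ => ?_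
  rw [← Finset.sum_add_distrib]
  refine Finset.sum_congr rfl fun v _ => ?_
  by_cases hu : u ∈ S <;> by_cases hv : v ∈ S <;> simp [hu, hv]

theorem stmt18_general (n : ℕ) {V : Type*} [DecidableEq V] (H : SimpleGraph V)
    (f : (Fin n → Bool) → V) (m : ℕ) (L : Fin m → Finset (Sym2 V)) (l : Fin m → Finset V)
    (hdisj : ∀ i j, i ≠ j → Disjoint (L i) (L j))
    (hcover : ∀ e ∈ H.edgeSet, ∃ i, e ∈ L i)
    (P : ∀ u v : Fin n → Bool, cubeAdj u v → H.Walk (f u) (f v))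
    (hP : ∀ u v h, (P u v h).length = H.dist (f u) (f v))
    (hcross : ∀ u v h, ∀ i : Fin m,
      ((P u v h).edges.countP (fun e => decide (e ∈ L i))) =
        if (f u ∈ l i ∧ f v ∉ l i) ∨ (f v ∈ l i ∧ f u ∉ l i) then 1 else 0) :
    wirelength (fun a b => H.dist a b) f =
      ∑ i, theta n (Finset.univ.filter fun v => f v ∈ l i) := by
  have hdist : ∀ u v (h : cubeAdj u v), H.dist (f u) (f v) =
      ∑ i, if (f u ∈ l i ∧ f v ∉ l i) ∨ (f v ∈ l i ∧ f u ∉ l i) then 1 else 0 := by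
    intro u v h
    rw [← hP u v h, (P u v h).length_eq_sum_countP_edges L hdisj hcover]
    exact Finset.sum_congr rfl fun i _ => hcross u v h i
  have hsum : (∑ u, ∑ v, if cubeAdj u v then H.dist (f u) (f v) else 0) =
      2 * ∑ i, theta n (Finset.univ.filter fun v => f v ∈ l i) := by
    calc (∑ u, ∑ v, if cubeAdj u v then H.dist (f u) (f v) else 0)
        = ∑ u, ∑ v, ∑ i, if cubeAdj u v then
            (if (f u ∈ l i ∧ f v ∉ l i) ∨ (f v ∈ l i ∧ f u ∉ l i) then 1 else 0) else 0 := by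
          refine Finset.sum_congr rfl fun u _ => Finset.sum_congr rfl fun v _ => ?_
          split_ifs with h
          · exact hdist u v h
          · simp
      _ = ∑ i, ∑ u, ∑ v, if cubeAdj u v then
            (if (f u ∈ l i ∧ f v ∉ l i) ∨ (f v ∈ l i ∧ f u ∉ l i) then 1 else 0) else 0 := by
          rw [Finset.sum_congr rfl fun u _ => Finset.sum_comm, Finset.sum_comm]
      _ = 2 * ∑ i, theta n (Finset.univ.filter fun v => f v ∈ l i) := by
          simp only [Finset.mul_sum, two_mul_theta, Finset.mem_filter, Finset.mem_univ, true_and]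
  rw [wirelength, hsum, Nat.mul_div_cancel_left _ two_pos]

/-- The partition-of-edge-cuts lemma: if the edge set of the host `H` is partitioned
into edge cuts `L i`, each separating `H` into two components with `l i` one of the
induced vertex sets, and for each hypercube edge some shortest path crosses each `L i`
exactly once or not at all according to whether the edge lies on the boundary of
`f⁻¹(l i)`, then the wirelength of `f` equals `∑ i, θ(n, f⁻¹(l i))`. -/
theorem stmt18 (n : ℕ) {V : Type*} [Fintype V] [DecidableEq V]
    (H : SimpleGraph V) [DecidableRel H.Adj]
    (hcard : Fintype.card V = 2 ^ n) (hconn : H.Connected)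
    (f : (Fin n → Bool) → V) (hf : Function.Bijective f)
    (m : ℕ) (L : Fin m → Finset (Sym2 V)) (l : Fin m → Finset V)
    (hL : ∀ i, (L i : Set (Sym2 V)) ⊆ H.edgeSet)
    (hdisj : ∀ i j, i ≠ j → Disjoint (L i) (L j))
    (hcover : ∀ e ∈ H.edgeSet, ∃ i, e ∈ L i)
    (hcut : ∀ i,
      (l i).Nonempty ∧ (l i ≠ Finset.univ) ∧
      (∀ u ∈ l i, ∀ v ∉ l i, ¬ (H.deleteEdges (L i : Set (Sym2 V))).Reachable u v) ∧
      (∀ u ∈ l i, ∀ v ∈ l i, (H.deleteEdges (L i : Set (Sym2 V))).Reachable u v) ∧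
      (∀ u ∉ l i, ∀ v ∉ l i, (H.deleteEdges (L i : Set (Sym2 V))).Reachable u v))
    (P : ∀ u v : Fin n → Bool, cubeAdj u v → H.Walk (f u) (f v))
    (hP : ∀ u v h, (P u v h).length = H.dist (f u) (f v))
    (hcross : ∀ u v h, ∀ i : Fin m,
      ((P u v h).edges.countP (fun e => decide (e ∈ L i))) =
        if (f u ∈ l i ∧ f v ∉ l i) ∨ (f v ∈ l i ∧ f u ∉ l i) then 1 else 0) :
    wirelength (fun a b => H.dist a b) f =
      ∑ i, theta n (Finset.univ.filter fun v => f v ∈ l i) :=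
  stmt18_general n H f m L l hdisj hcover P hP hcross
end
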